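/- Let f : ℝ → ℝ be continuous with compact support and let 0 ≤ β < 1. Then lim_{R→∞} limsup_{v→0⁺} | ∫_{−1}^{1} F_{R,β}(u,v) du | = 0. -/

import Mathlib

open Filter Topology MeasureTheory
open scoped ENNReal NNReal

/-- `χ_R`, the indicator function of `[R,∞)`. -/
noncomputable def chiR (R x : ℝ) : ℝ := if R ≤ x then 1 else 0

/-- `v_{c,d}(u,v) = v / ((cu+d)² + c²v²)`. -/
noncomputable def vcd (c d u v : ℝ) : ℝ := v / ((c * u + d) ^ 2 + c ^ 2 * v ^ 2)

/-- The function `F_{R,β}` on the space of affine lattices, evaluated along the non-linear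
horocycle `ñ(u)a(v)`:
`F_{R,β}(u,v) = Σ_{(c,d)∈ℤ², gcd(c,d)=1} Σ_{m∈ℤ}
  f((cu²/4 + du/2 + m)·v_{c,d}^{1/2}) · v_{c,d}^β · χ_R(v_{c,d})`. -/
noncomputable def FRbeta (f : ℝ → ℝ) (R β u v : ℝ) : ℝ :=
  ∑' p : ℤ × ℤ, ∑' m : ℤ,
    if Int.gcd p.1 p.2 = 1 then
      f (((p.1 : ℝ) * u ^ 2 / 4 + (p.2 : ℝ) * u / 2 + (m : ℝ)) *
          Real.sqrt (vcd (p.1 : ℝ) (p.2 : ℝ) u v)) *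
        (vcd (p.1 : ℝ) (p.2 : ℝ) u v) ^ β * chiR R (vcd (p.1 : ℝ) (p.2 : ℝ) u v)
    else 0


namespace NoEscapeAux

lemma vcd_nonneg {c d u v : ℝ} (hv : 0 ≤ v) : 0 ≤ vcd c d u v :=
  div_nonneg hv (by positivity)

lemma chiR_nonneg (R x : ℝ) : 0 ≤ chiR R x := by unfold chiR; split <;> norm_num

lemma chiR_le_one (R x : ℝ) : chiR R x ≤ 1 := by unfold chiR; split <;> norm_num

lemma chiR_of_le {R x : ℝ} (h : R ≤ x) : chiR R x = 1 := if_pos h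

lemma chiR_of_lt {R x : ℝ} (h : x < R) : chiR R x = 0 := if_neg (not_le.mpr h)

/-- if `S ≤ vcd` with `S > 0` then the denominator is at most `v/S`. -/
lemma denom_le_of_le_vcd {c d u v S : ℝ} (hS : 0 < S) (h : S ≤ vcd c d u v) :
    (c * u + d) ^ 2 + c ^ 2 * v ^ 2 ≤ v / S := by
  set D := (c * u + d) ^ 2 + c ^ 2 * v ^ 2 with hD
  have hD0 : 0 ≤ D := by positivity
  rcases eq_or_lt_of_le hD0 with h0 | h0
  · have : vcd c d u v = 0 := by rw [vcd, ← hD, ← h0, div_zero]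
    rw [this] at h; linarith
  · have h1 : S * D ≤ v := by
      have := (le_div_iff₀ h0).mp h
      linarith [this]
    rw [le_div_iff₀ hS]; linarith [h1]

/-- if `c ≠ 0` then `vcd ≤ 1/(c² v)`. -/
lemma vcd_le_one_div {c d u v : ℝ} (hv : 0 < v) (hc : c ≠ 0) :
    vcd c d u v ≤ 1 / (c ^ 2 * v) := by
  have hc2 : 0 < c ^ 2 := by positivity
  have h1 : vcd c d u v ≤ v / (c ^ 2 * v ^ 2) := by
    apply div_le_div_of_nonneg_left hv.le (by positivity)
    nlinarith [sq_nonneg (c * u + d)]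
  calc vcd c d u v ≤ v / (c ^ 2 * v ^ 2) := h1
    _ = 1 / (c ^ 2 * v) := by field_simp

/-- if `1 ≤ (cu+d)²` then `vcd ≤ v`. -/
lemma vcd_le_v {c d u v : ℝ} (hv : 0 < v) (h1 : 1 ≤ (c * u + d) ^ 2) :
    vcd c d u v ≤ v := by
  have hD : (1:ℝ) ≤ (c * u + d) ^ 2 + c ^ 2 * v ^ 2 := by nlinarith [sq_nonneg (c*v)]
  calc vcd c d u v ≤ v / 1 := by
        apply div_le_div_of_nonneg_left hv.le one_pos; linarith
    _ = v := div_one v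

/-- integer version: `vcd ≤ 1/v` always, when `0 < v ≤ 1`. -/
lemma vcd_le_inv {v : ℝ} (c d : ℤ) (u : ℝ) (hv : 0 < v) (hv1 : v ≤ 1) :
    vcd (c:ℝ) (d:ℝ) u v ≤ 1 / v := by
  rcases eq_or_ne c 0 with rfl | hc
  · rw [Int.cast_zero]
    rcases eq_or_ne d 0 with rfl | hd
    · simp only [vcd]
      norm_num
      positivity
    · have h1 : (1:ℝ) ≤ ((0:ℝ) * u + (d:ℝ)) ^ 2 := by
        have : (1:ℝ) ≤ |(d:ℝ)| := by
          rw [← Int.cast_abs]; exact_mod_cast Int.one_le_abs hd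
        nlinarith [this, sq_abs ((d:ℝ))]
      calc vcd 0 (d:ℝ) u v ≤ v := vcd_le_v hv h1
        _ ≤ 1 / v := by rw [le_div_iff₀ hv]; nlinarith
  · have hc1 : (1:ℝ) ≤ (c:ℝ) ^ 2 := by
      have : (1:ℝ) ≤ |(c:ℝ)| := by rw [← Int.cast_abs]; exact_mod_cast Int.one_le_abs hc
      nlinarith [this, sq_abs ((c:ℝ))]
    calc vcd (c:ℝ) (d:ℝ) u v ≤ 1 / ((c:ℝ) ^ 2 * v) := vcd_le_one_div hv (by exact_mod_cast hc)
      _ ≤ 1 / v := by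
          apply div_le_div_of_nonneg_left one_pos.le hv
          nlinarith

lemma vcd_measurable (c d v : ℝ) : Measurable (fun u : ℝ => vcd c d u v) := by
  unfold vcd
  exact measurable_const.div (by fun_prop)

/-- The key measure estimate. -/
lemma measure_tsum_le {v S : ℝ} (hv0 : 0 < v) (hv1 : v < 1) (hS : 1 ≤ S) :
    ∑' p : ℤ × ℤ, volume ({u : ℝ | S ≤ vcd (p.1:ℝ) (p.2:ℝ) u v} ∩ Set.Icc (-1:ℝ) 1)
      ≤ ENNReal.ofReal (20 / S) := by
  have hS0 : (0:ℝ) < S := by linarith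
  set ε : ℝ := Real.sqrt (v / S) with hεdef
  have hε0 : 0 ≤ ε := Real.sqrt_nonneg _
  have hvS0 : 0 ≤ v / S := by positivity
  have hε2 : ε ^ 2 = v / S := Real.sq_sqrt hvS0
  have hε1 : ε < 1 := by
    have h : v / S < 1 := by rw [div_lt_one hS0]; linarith
    nlinarith
  -- set of interest
  set A : ℤ → ℤ → Set ℝ := fun c d => {u : ℝ | S ≤ vcd (c:ℝ) (d:ℝ) u v} ∩ Set.Icc (-1:ℝ) 1 with hA
  -- (1) per (c,d) with c ≠ 0 : volume bound
  have h1 : ∀ c d : ℤ, c ≠ 0 → volume (A c d) ≤ ENNReal.ofReal (2 * (ε / |(c:ℝ)|)) := by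
    intro c d hc
    have hc0 : (c:ℝ) ≠ 0 := by exact_mod_cast hc
    have hcabs : 0 < |(c:ℝ)| := abs_pos.mpr hc0
    have hsub : A c d ⊆ Metric.closedBall (-(d:ℝ)/(c:ℝ)) (ε / |(c:ℝ)|) := by
      rintro u ⟨hu, -⟩
      have hd2 : ((c:ℝ) * u + d) ^ 2 ≤ v / S := by
        have := denom_le_of_le_vcd hS0 hu
        nlinarith [sq_nonneg ((c:ℝ) * v)]
      have habs : |(c:ℝ) * u + d| ≤ ε := by
        rw [← Real.sqrt_sq_eq_abs]; exact Real.sqrt_le_sqrt hd2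
      rw [Metric.mem_closedBall, Real.dist_eq]
      have heq : u - (-(d:ℝ)/(c:ℝ)) = ((c:ℝ) * u + d) / c := by field_simp; ring
      rw [heq, abs_div]
      gcongr
    calc volume (A c d) ≤ volume (Metric.closedBall (-(d:ℝ)/(c:ℝ)) (ε / |(c:ℝ)|)) :=
          measure_mono hsub
      _ = ENNReal.ofReal (2 * (ε / |(c:ℝ)|)) := Real.volume_closedBall _ _
  -- (2) empty if |d| > |c| + 1
  have h2 : ∀ c d : ℤ, ((|c| + 1 : ℤ) < |d|) → A c d = ∅ := by
    intro c d hcd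
    rw [hA, Set.eq_empty_iff_forall_notMem]
    rintro u ⟨hu, hu1⟩
    have hd2 : ((c:ℝ) * u + d) ^ 2 ≤ v / S := by
      have := denom_le_of_le_vcd hS0 hu
      nlinarith [sq_nonneg ((c:ℝ) * v)]
    have hvs1 : v / S < 1 := by
      calc v / S ≤ v / 1 := div_le_div_of_nonneg_left hv0.le one_pos hS
        _ = v := div_one v
        _ < 1 := hv1
    have habs : |(c:ℝ) * u + d| < 1 := by nlinarith [abs_nonneg ((c:ℝ)*u+d), sq_abs ((c:ℝ)*u+d)]
    have hureal : |u| ≤ 1 := abs_le.mpr ⟨hu1.1, hu1.2⟩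
    have hdd : |(d:ℝ)| ≤ |(c:ℝ)| * |u| + |(c:ℝ)*u + d| := by
      have : (d:ℝ) = ((c:ℝ)*u + d) - (c:ℝ)*u := by ring
      calc |(d:ℝ)| = |((c:ℝ)*u + d) - (c:ℝ)*u| := by rw [← this]
        _ ≤ |(c:ℝ)*u + d| + |(c:ℝ)*u| := abs_sub _ _
        _ = |(c:ℝ)*u + d| + |(c:ℝ)| * |u| := by rw [abs_mul]
        _ = |(c:ℝ)| * |u| + |(c:ℝ)*u + d| := by ring
    have hcast : ((|c| : ℤ) : ℝ) + 1 < ((|d| : ℤ) : ℝ) := by exact_mod_cast hcd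
    rw [Int.cast_abs, Int.cast_abs] at hcast
    nlinarith [abs_nonneg (c:ℝ)]
  -- (3) empty if c² S v > 1
  have h3 : ∀ c d : ℤ, c ≠ 0 → (1 < (c:ℝ)^2 * S * v) → A c d = ∅ := by
    intro c d hc hbig
    rw [hA, Set.eq_empty_iff_forall_notMem]
    rintro u ⟨hu, -⟩
    have hc0 : (c:ℝ) ≠ 0 := by exact_mod_cast hc
    have := vcd_le_one_div (u := u) (d := (d:ℝ)) hv0 hc0
    have hlt : 1 / ((c:ℝ)^2 * v) < S := by
      rw [div_lt_iff₀ (by positivity)]; nlinarith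
    linarith [le_trans hu this]
  -- assemble
  set q : ℝ := Real.sqrt (1 / (S * v)) with hq
  have hq0 : 0 ≤ q := Real.sqrt_nonneg _
  set C : ℤ := ⌊q⌋ with hC
  have hC0 : (0:ℤ) ≤ C := Int.le_floor.mpr (by exact_mod_cast hq0)
  -- inner sums
  have hInner : ∀ c : ℤ, c ≠ 0 → ∑' d : ℤ, volume (A c d) ≤ ENNReal.ofReal (10 * ε) := by
    intro c hc
    have hc1 : (1:ℤ) ≤ |c| := Int.one_le_abs hc
    have hceq : ∑' d : ℤ, volume (A c d)
        = ∑ d ∈ Finset.Icc (-(|c|+1)) (|c|+1), volume (A c d) := by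
      apply tsum_eq_sum
      intro d hd
      have hd' : (|c| + 1 : ℤ) < |d| := by
        rcases not_and_or.mp (Finset.mem_Icc.not.mp hd) with h | h
        · rw [abs_of_neg (by omega : d < 0)]; omega
        · rw [abs_of_pos (by omega : 0 < d)]; omega
      rw [h2 c d hd', measure_empty]
    rw [hceq]
    have ha1 : (1:ℝ) ≤ ((|c| : ℤ) : ℝ) := by exact_mod_cast hc1
    calc ∑ d ∈ Finset.Icc (-(|c|+1)) (|c|+1), volume (A c d)
        ≤ (Finset.Icc (-(|c|+1)) (|c|+1)).card • ENNReal.ofReal (2 * (ε / |(c:ℝ)|)) :=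
          Finset.sum_le_card_nsmul _ _ _ (fun d _ => h1 c d hc)
      _ = ((Finset.Icc (-(|c|+1)) (|c|+1)).card : ℝ≥0∞) * ENNReal.ofReal (2 * (ε / |(c:ℝ)|)) := by
          rw [nsmul_eq_mul]
      _ = ENNReal.ofReal (((Finset.Icc (-(|c|+1)) (|c|+1)).card : ℝ) * (2 * (ε / |(c:ℝ)|))) := by
          rw [← ENNReal.ofReal_natCast ((Finset.Icc (-(|c|+1)) (|c|+1)).card),
            ← ENNReal.ofReal_mul (by positivity)]
      _ ≤ ENNReal.ofReal (10 * ε) := by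
          apply ENNReal.ofReal_le_ofReal
          have hcard : (Finset.Icc (-(|c|+1)) (|c|+1)).card = (2*|c|+3).toNat := by
            rw [Int.card_Icc]; congr 1; ring
          have hcardR : ((Finset.Icc (-(|c|+1)) (|c|+1)).card : ℝ) = 2*((|c|:ℤ):ℝ)+3 := by
            rw [hcard]
            have h0 : ((((2*|c|+3).toNat : ℤ)) : ℝ) = ((2*|c|+3 : ℤ) : ℝ) := by
              rw [Int.toNat_of_nonneg (by omega)]
            push_cast at h0 ⊢
            linarith
          rw [hcardR, ← Int.cast_abs]
          have heq : (2*((|c|:ℤ):ℝ)+3) * (2 * (ε / ((|c|:ℤ):ℝ)))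
              = ((4*((|c|:ℤ):ℝ)+6)/((|c|:ℤ):ℝ)) * ε := by
            field_simp; ring
          rw [heq]
          have hd10 : (4*((|c|:ℤ):ℝ)+6)/((|c|:ℤ):ℝ) ≤ 10 := by
            rw [div_le_iff₀ (by linarith)]; linarith
          nlinarith
  -- outer sum
  rw [show (∑' p : ℤ × ℤ, volume ({u : ℝ | S ≤ vcd (p.1:ℝ) (p.2:ℝ) u v} ∩ Set.Icc (-1:ℝ) 1))
      = ∑' c : ℤ, ∑' d : ℤ, volume (A c d) from ENNReal.tsum_prod']
  set s : Finset ℤ := (Finset.Icc (-C) C).erase 0 with hs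
  have hgz : ∀ c ∉ s, (∑' d : ℤ, volume (A c d)) = 0 := by
    intro c hcs
    have hzero : ∀ d : ℤ, volume (A c d) = 0 := by
      intro d
      rcases eq_or_ne c 0 with rfl | hc
      · have hAe : A 0 d = ∅ := by
          rw [hA, Set.eq_empty_iff_forall_notMem]
          rintro u ⟨hu, -⟩
          simp only [Set.mem_setOf_eq, Int.cast_zero] at hu
          rcases eq_or_ne d 0 with rfl | hd
          · have h0 : vcd (0:ℝ) ((0:ℤ):ℝ) u v = 0 := by
              simp [vcd]
            rw [h0] at hu; linarith
          · have h1d : (1:ℝ) ≤ ((0:ℝ)*u + (d:ℝ))^2 := by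
              have : (1:ℝ) ≤ |(d:ℝ)| := by
                rw [← Int.cast_abs]; exact_mod_cast Int.one_le_abs hd
              nlinarith [sq_abs ((d:ℝ))]
            have := vcd_le_v (c := (0:ℝ)) hv0 h1d
            linarith [le_trans hu this]
        simp only [hA] at hAe ⊢
        rw [hAe, measure_empty]
      · have hcIcc : c ∉ Finset.Icc (-C) C := fun h => hcs (Finset.mem_erase.mpr ⟨hc, h⟩)
        have habs : C < |c| := by
          rcases not_and_or.mp (Finset.mem_Icc.not.mp hcIcc) with h | h
          · rw [abs_of_neg (by omega : c < 0)]; omega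
          · rw [abs_of_pos (by omega : 0 < c)]; omega
        have hbig : 1 < (c:ℝ)^2 * S * v := by
          have hq2 : q^2 = 1/(S*v) := Real.sq_sqrt (by positivity)
          have hqlt : q < ((|c|:ℤ):ℝ) := by
            have h1' : q < (C:ℝ) + 1 := Int.lt_floor_add_one q
            have h2' : ((C:ℝ) + 1) ≤ ((|c|:ℤ):ℝ) := by exact_mod_cast habs
            linarith
          have hsq : 1/(S*v) < (c:ℝ)^2 := by
            rw [← hq2]
            have := sq_abs ((c:ℝ))
            rw [← Int.cast_abs] at this
            nlinarith
          rw [div_lt_iff₀ (by positivity)] at hsq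
          nlinarith
        rw [h3 c d hc hbig, measure_empty]
    simp [hzero]
  rw [tsum_eq_sum hgz]
  have hcards : ((s.card : ℕ) : ℝ) ≤ 2 * (C:ℝ) := by
    have hmem0 : (0:ℤ) ∈ Finset.Icc (-C) C := Finset.mem_Icc.mpr ⟨by omega, hC0⟩
    have h1' : s.card = (2*C+1).toNat - 1 := by
      rw [hs, Finset.card_erase_of_mem hmem0, Int.card_Icc]
      congr 1; congr 1; ring
    have h2' : (1:ℕ) ≤ (2*C+1).toNat := by omega
    rw [h1', Nat.cast_sub h2']
    have h3' : (((2*C+1).toNat : ℤ) : ℝ) = ((2*C+1 : ℤ) : ℝ) := by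
      rw [Int.toNat_of_nonneg (by omega)]
    push_cast at h3' ⊢
    linarith
  have hqε : q * ε = 1/S := by
    rw [hq, hεdef, ← Real.sqrt_mul (by positivity)]
    rw [show (1/(S*v))*(v/S) = (1/S)^2 by field_simp]
    exact Real.sqrt_sq (by positivity)
  calc ∑ c ∈ s, ∑' d : ℤ, volume (A c d)
      ≤ s.card • ENNReal.ofReal (10 * ε) :=
        Finset.sum_le_card_nsmul _ _ _ (fun c hcs => hInner c (Finset.ne_of_mem_erase hcs))
    _ = ENNReal.ofReal ((s.card : ℝ) * (10 * ε)) := by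
        rw [nsmul_eq_mul, ← ENNReal.ofReal_natCast s.card,
          ← ENNReal.ofReal_mul (by positivity)]
    _ ≤ ENNReal.ofReal (20 / S) := by
        apply ENNReal.ofReal_le_ofReal
        have hCq : (C:ℝ) ≤ q := Int.floor_le q
        have : (s.card : ℝ) * (10 * ε) ≤ (2*q) * (10 * ε) := by
          apply mul_le_mul_of_nonneg_right _ (by positivity)
          linarith
        calc (s.card : ℝ) * (10 * ε) ≤ (2*q) * (10 * ε) := this
          _ = 20 * (q * ε) := by ring
          _ = 20 / S := by rw [hqε]; ring
lemma dyadic_pointwise {R w : ℝ} (hR : 1 ≤ R) (h : R ≤ w) :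
    ∃ k : ℕ, (2:ℝ)^k * R ≤ w ∧ w ≤ (2:ℝ)^(k+1) * R := by
  have hR0 : (0:ℝ) < R := by linarith
  set t : ℝ := w / R with ht
  have ht1 : 1 ≤ t := (one_le_div hR0).mpr h
  set n : ℕ := ⌊t⌋₊ with hn
  have hn1 : 1 ≤ n := Nat.le_floor (by exact_mod_cast ht1)
  refine ⟨Nat.log 2 n, ?_, ?_⟩
  · have h1 : (2^(Nat.log 2 n) : ℕ) ≤ n := Nat.pow_log_le_self 2 (by omega)
    have h2 : ((2:ℝ))^(Nat.log 2 n) ≤ t := by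
      calc ((2:ℝ))^(Nat.log 2 n) = ((2^(Nat.log 2 n) : ℕ) : ℝ) := by push_cast; ring
        _ ≤ (n : ℝ) := by exact_mod_cast h1
        _ ≤ t := Nat.floor_le (by linarith)
    calc (2:ℝ)^(Nat.log 2 n) * R ≤ t * R := by nlinarith
      _ = w := div_mul_cancel₀ w hR0.ne'
  · have h1 : n < 2^(Nat.log 2 n + 1) := Nat.lt_pow_succ_log_self (by norm_num) n
    have h2 : t < ((2:ℝ))^(Nat.log 2 n + 1) := by
      calc t < (n:ℝ) + 1 := Nat.lt_floor_add_one t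
        _ ≤ ((2^(Nat.log 2 n + 1) : ℕ) : ℝ) := by exact_mod_cast h1
        _ = ((2:ℝ))^(Nat.log 2 n + 1) := by push_cast; ring
    have : w = t * R := (div_mul_cancel₀ w hR0.ne').symm
    nlinarith

lemma term_eq (R β : ℝ) (hR0 : 0 < R) (k : ℕ) :
    ((2:ℝ)^(k+1) * R)^β * (20/((2:ℝ)^k * R))
      = (20 * (2:ℝ)^β * R^(β-1)) * ((2:ℝ)^(β-1))^k := by
  have h2 : (0:ℝ) < 2 := two_pos
  rw [Real.mul_rpow (by positivity) hR0.le]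
  rw [← Real.rpow_natCast (2:ℝ) (k+1), ← Real.rpow_mul h2.le]
  rw [← Real.rpow_natCast ((2:ℝ)^(β-1)) k, ← Real.rpow_mul h2.le]
  rw [← Real.rpow_natCast (2:ℝ) k]
  rw [Real.rpow_sub hR0, Real.rpow_one]
  rw [show ((k+1:ℕ):ℝ)*β = β + (β-1)*(k:ℝ) + (k:ℝ) by push_cast; ring]
  rw [Real.rpow_add h2, Real.rpow_add h2]
  have hk0 : ((2:ℝ))^((k:ℕ):ℝ) ≠ 0 := by positivity
  field_simp

lemma lintegral_tsum_le {v R β : ℝ} (hv0 : 0 < v) (hv1 : v < 1) (hR : 1 ≤ R)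
    (hβ0 : 0 ≤ β) (hβ1 : β < 1) :
    ∑' p : ℤ × ℤ, ∫⁻ u in Set.Icc (-1:ℝ) 1,
        ENNReal.ofReal ((vcd (p.1:ℝ) (p.2:ℝ) u v) ^ β * chiR R (vcd (p.1:ℝ) (p.2:ℝ) u v))
      ≤ ENNReal.ofReal (20 * (2:ℝ)^β * (1 - (2:ℝ)^(β-1))⁻¹ * R^(β-1)) := by
  have hR0 : (0:ℝ) < R := by linarith
  set Ak : ℤ × ℤ → ℕ → Set ℝ :=
    fun p k => {u : ℝ | (2:ℝ)^k * R ≤ vcd (p.1:ℝ) (p.2:ℝ) u v} with hAk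
  have hAkm : ∀ p k, MeasurableSet (Ak p k) :=
    fun p k => measurableSet_le measurable_const (vcd_measurable _ _ _)
  -- pointwise dyadic bound
  have hpt : ∀ (p : ℤ × ℤ) (u : ℝ),
      ENNReal.ofReal ((vcd (p.1:ℝ) (p.2:ℝ) u v) ^ β * chiR R (vcd (p.1:ℝ) (p.2:ℝ) u v))
        ≤ ∑' k : ℕ, (Ak p k).indicator
            (fun _ => ENNReal.ofReal (((2:ℝ)^(k+1) * R)^β)) u := by
    intro p u
    by_cases hRw : R ≤ vcd (p.1:ℝ) (p.2:ℝ) u v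
    · obtain ⟨k, hk1, hk2⟩ := dyadic_pointwise hR hRw
      have hmem : u ∈ Ak p k := hk1
      have hterm : (Ak p k).indicator
          (fun _ => ENNReal.ofReal (((2:ℝ)^(k+1) * R)^β)) u
          = ENNReal.ofReal (((2:ℝ)^(k+1) * R)^β) := Set.indicator_of_mem hmem _
      calc ENNReal.ofReal ((vcd (p.1:ℝ) (p.2:ℝ) u v) ^ β * chiR R (vcd (p.1:ℝ) (p.2:ℝ) u v))
          = ENNReal.ofReal ((vcd (p.1:ℝ) (p.2:ℝ) u v) ^ β) := by
            rw [chiR_of_le hRw, mul_one]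
        _ ≤ ENNReal.ofReal (((2:ℝ)^(k+1) * R)^β) :=
            ENNReal.ofReal_le_ofReal (Real.rpow_le_rpow (vcd_nonneg hv0.le) hk2 hβ0)
        _ = (Ak p k).indicator (fun _ => ENNReal.ofReal (((2:ℝ)^(k+1) * R)^β)) u := hterm.symm
        _ ≤ ∑' k : ℕ, (Ak p k).indicator (fun _ => ENNReal.ofReal (((2:ℝ)^(k+1) * R)^β)) u :=
            ENNReal.le_tsum k
    · rw [chiR_of_lt (not_le.mp hRw), mul_zero]
      simp
  -- per p estimate
  have hstep : ∀ p : ℤ × ℤ,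
      (∫⁻ u in Set.Icc (-1:ℝ) 1,
        ENNReal.ofReal ((vcd (p.1:ℝ) (p.2:ℝ) u v) ^ β * chiR R (vcd (p.1:ℝ) (p.2:ℝ) u v)))
      ≤ ∑' k : ℕ, ENNReal.ofReal (((2:ℝ)^(k+1) * R)^β) * volume (Ak p k ∩ Set.Icc (-1:ℝ) 1) := by
    intro p
    calc (∫⁻ u in Set.Icc (-1:ℝ) 1,
          ENNReal.ofReal ((vcd (p.1:ℝ) (p.2:ℝ) u v) ^ β * chiR R (vcd (p.1:ℝ) (p.2:ℝ) u v)))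
        ≤ ∫⁻ u in Set.Icc (-1:ℝ) 1, ∑' k : ℕ, (Ak p k).indicator
            (fun _ => ENNReal.ofReal (((2:ℝ)^(k+1) * R)^β)) u := lintegral_mono (hpt p)
      _ = ∑' k : ℕ, ∫⁻ u in Set.Icc (-1:ℝ) 1, (Ak p k).indicator
            (fun _ => ENNReal.ofReal (((2:ℝ)^(k+1) * R)^β)) u :=
          lintegral_tsum (fun k => (measurable_const.indicator (hAkm p k)).aemeasurable)
      _ = ∑' k : ℕ, ENNReal.ofReal (((2:ℝ)^(k+1) * R)^β) * volume (Ak p k ∩ Set.Icc (-1:ℝ) 1) := by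
          apply tsum_congr; intro k
          rw [lintegral_indicator (hAkm p k), lintegral_const,
            Measure.restrict_restrict (hAkm p k), Measure.restrict_apply_univ]
  -- sum over p, swap, geometric series
  have hgeom0 : (0:ℝ) < (2:ℝ)^(β-1) := Real.rpow_pos_of_pos two_pos _
  have hgeom1 : (2:ℝ)^(β-1) < 1 :=
    Real.rpow_lt_one_of_one_lt_of_neg one_lt_two (by linarith)
  calc ∑' p : ℤ × ℤ, ∫⁻ u in Set.Icc (-1:ℝ) 1,
        ENNReal.ofReal ((vcd (p.1:ℝ) (p.2:ℝ) u v) ^ β * chiR R (vcd (p.1:ℝ) (p.2:ℝ) u v))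
      ≤ ∑' p : ℤ × ℤ, ∑' k : ℕ,
          ENNReal.ofReal (((2:ℝ)^(k+1) * R)^β) * volume (Ak p k ∩ Set.Icc (-1:ℝ) 1) :=
        ENNReal.tsum_le_tsum hstep
    _ = ∑' k : ℕ, ∑' p : ℤ × ℤ,
          ENNReal.ofReal (((2:ℝ)^(k+1) * R)^β) * volume (Ak p k ∩ Set.Icc (-1:ℝ) 1) :=
        ENNReal.tsum_comm
    _ = ∑' k : ℕ, ENNReal.ofReal (((2:ℝ)^(k+1) * R)^β)
          * ∑' p : ℤ × ℤ, volume (Ak p k ∩ Set.Icc (-1:ℝ) 1) := by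
        apply tsum_congr; intro k; rw [ENNReal.tsum_mul_left]
    _ ≤ ∑' k : ℕ, ENNReal.ofReal (((2:ℝ)^(k+1) * R)^β)
          * ENNReal.ofReal (20 / ((2:ℝ)^k * R)) := by
        apply ENNReal.tsum_le_tsum; intro k
        apply mul_le_mul_right
        have hS : 1 ≤ (2:ℝ)^k * R := by
          have : (1:ℝ) ≤ (2:ℝ)^k := one_le_pow₀ (by norm_num)
          nlinarith
        exact measure_tsum_le hv0 hv1 hS
    _ = ∑' k : ℕ, ENNReal.ofReal (20 * (2:ℝ)^β * R^(β-1)) * ENNReal.ofReal ((2:ℝ)^(β-1))^k := by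
        apply tsum_congr; intro k
        rw [← ENNReal.ofReal_mul (by positivity), term_eq R β hR0 k,
          ENNReal.ofReal_mul (by positivity), ENNReal.ofReal_pow hgeom0.le]
    _ = ENNReal.ofReal (20 * (2:ℝ)^β * R^(β-1)) * (1 - ENNReal.ofReal ((2:ℝ)^(β-1)))⁻¹ := by
        rw [ENNReal.tsum_mul_left, ENNReal.tsum_geometric]
    _ = ENNReal.ofReal (20 * (2:ℝ)^β * (1 - (2:ℝ)^(β-1))⁻¹ * R^(β-1)) := by
        rw [← ENNReal.ofReal_one, ← ENNReal.ofReal_sub _ hgeom0.le,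
          ← ENNReal.ofReal_inv_of_pos (by linarith), ← ENNReal.ofReal_mul (by positivity)]
        congr 1
        ring
/-- Counting bound for the inner sum. -/
lemma sum_abs_f_le (f : ℝ → ℝ) (M L : ℝ) (hM : ∀ x, |f x| ≤ M)
    (hL : ∀ x, f x ≠ 0 → |x| ≤ L) (hL0 : 0 ≤ L) (x s : ℝ) (hs : 1 ≤ s) (Q : Finset ℤ) :
    ∑ m ∈ Q, |f ((x + m) * s)| ≤ M * (2*L+1) := by
  have hM0 : 0 ≤ M := le_trans (abs_nonneg _) (hM 0)
  have hs0 : 0 < s := by linarith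
  set I : Finset ℤ := Finset.Icc ⌈-(L/s) - x⌉ ⌊L/s - x⌋ with hI
  have hstep : ∀ m : ℤ, |f ((x + m) * s)| ≤ if m ∈ I then M else 0 := by
    intro m
    by_cases hfm : f ((x + m) * s) = 0
    · rw [hfm, abs_zero]
      split
      · exact hM0
      · exact le_refl 0
    · have h1 : |(x + m) * s| ≤ L := hL _ hfm
      have h2 : |x + m| ≤ L / s := by
        rw [abs_mul, abs_of_pos hs0] at h1
        rw [le_div_iff₀ hs0]; exact h1
      have hmem : m ∈ I := by
        rw [hI, Finset.mem_Icc]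
        constructor
        · rw [Int.ceil_le]
          have := (abs_le.mp h2).1
          push_cast
          linarith
        · rw [Int.le_floor]
          have := (abs_le.mp h2).2
          push_cast
          linarith
      rw [if_pos hmem]; exact hM _
  have hcard : (I.card : ℝ) ≤ 2*L+1 := by
    rw [hI, Int.card_Icc]
    set a := ⌈-(L/s) - x⌉ with ha
    set b := ⌊L/s - x⌋ with hb
    have hba : (b:ℝ) ≤ L/s - x := Int.floor_le _
    have hab : -(L/s) - x ≤ (a:ℝ) := Int.le_ceil _
    have hLs : L/s ≤ L := div_le_self hL0 hs
    have hLs0 : 0 ≤ L/s := by positivity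
    by_cases hc : b + 1 - a ≤ 0
    · rw [Int.toNat_of_nonpos hc]
      norm_num; linarith
    · have h0 : (0:ℤ) ≤ b + 1 - a := by omega
      have hcst : (((b+1-a).toNat : ℤ) : ℝ) = ((b+1-a : ℤ) : ℝ) := by
        rw [Int.toNat_of_nonneg h0]
      push_cast at hcst ⊢
      rw [hcst]
      linarith
  calc ∑ m ∈ Q, |f ((x + m) * s)| ≤ ∑ m ∈ Q, (if m ∈ I then M else 0) :=
        Finset.sum_le_sum (fun m _ => hstep m)
    _ = ∑ m ∈ Q ∩ I, M := Finset.sum_ite_mem Q I (fun _ => M)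
    _ = ((Q ∩ I).card : ℝ) * M := by rw [Finset.sum_const, nsmul_eq_mul]
    _ ≤ (I.card : ℝ) * M := by
        apply mul_le_mul_of_nonneg_right _ hM0
        exact_mod_cast Finset.card_le_card (Finset.inter_subset_right)
    _ ≤ (2*L+1) * M := mul_le_mul_of_nonneg_right hcard hM0
    _ = M * (2*L+1) := by ring
/-! ### Local abbreviations -/

noncomputable def wp (v : ℝ) (p : ℤ × ℤ) (u : ℝ) : ℝ := vcd (p.1:ℝ) (p.2:ℝ) u v

noncomputable def Gp (v R β : ℝ) (p : ℤ × ℤ) (u : ℝ) : ℝ :=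
  (wp v p u) ^ β * chiR R (wp v p u)

noncomputable def Xp (p : ℤ × ℤ) (u : ℝ) : ℝ := (p.1:ℝ) * u ^ 2 / 4 + (p.2:ℝ) * u / 2

noncomputable def termp (f : ℝ → ℝ) (v R β : ℝ) (p : ℤ × ℤ) (m : ℤ) (u : ℝ) : ℝ :=
  if Int.gcd p.1 p.2 = 1 then
    f ((Xp p u + (m:ℝ)) * Real.sqrt (wp v p u)) * (wp v p u) ^ β * chiR R (wp v p u)
  else 0

noncomputable def Mps (L : ℝ) (p : ℤ × ℤ) : Finset ℤ :=
  Finset.Icc (-(|p.1| + |p.2| + ⌈L⌉ + 1)) (|p.1| + |p.2| + ⌈L⌉ + 1)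

noncomputable def Tp (f : ℝ → ℝ) (v R β L : ℝ) (p : ℤ × ℤ) (u : ℝ) : ℝ :=
  ∑ m ∈ Mps L p, termp f v R β p m u

noncomputable def Kz (R v : ℝ) : Finset (ℤ × ℤ) :=
  Finset.Icc (-⌈Real.sqrt (1/(R*v))⌉) ⌈Real.sqrt (1/(R*v))⌉ ×ˢ
    Finset.Icc (-(⌈Real.sqrt (1/(R*v))⌉+1)) (⌈Real.sqrt (1/(R*v))⌉+1)

lemma FRbeta_eq_tsum (f : ℝ → ℝ) (R β u v : ℝ) :
    FRbeta f R β u v = ∑' p : ℤ × ℤ, ∑' m : ℤ, termp f v R β p m u := rfl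

lemma Xp_bound (p : ℤ × ℤ) (u : ℝ) (hu : |u| ≤ 1) :
    |Xp p u| ≤ ((|p.1| : ℤ) : ℝ) + ((|p.2| : ℤ) : ℝ) := by
  have h1 : |Xp p u| ≤ |(p.1:ℝ)| * |u|^2 / 4 + |(p.2:ℝ)| * |u| / 2 := by
    unfold Xp
    calc |(p.1:ℝ) * u ^ 2 / 4 + (p.2:ℝ) * u / 2|
        ≤ |(p.1:ℝ) * u ^ 2 / 4| + |(p.2:ℝ) * u / 2| := abs_add_le _ _
      _ = |(p.1:ℝ)| * |u|^2 / 4 + |(p.2:ℝ)| * |u| / 2 := by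
          rw [abs_div, abs_div, abs_mul, abs_mul, sq_abs, ← sq_abs u]
          norm_num
  have hu2 : |u|^2 ≤ 1 := by nlinarith [abs_nonneg u]
  have h2 : |(p.1:ℝ)| * |u|^2 / 4 ≤ |(p.1:ℝ)| := by nlinarith [abs_nonneg (p.1:ℝ), abs_nonneg u]
  have h3 : |(p.2:ℝ)| * |u| / 2 ≤ |(p.2:ℝ)| := by nlinarith [abs_nonneg (p.2:ℝ), abs_nonneg u]
  rw [Int.cast_abs, Int.cast_abs]
  linarith

/-- vanishing of terms outside `Mps`. -/
lemma termp_eq_zero_of_not_mem (f : ℝ → ℝ) (M L : ℝ)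
    (hL : ∀ x, f x ≠ 0 → |x| ≤ L)
    {v R β : ℝ} (hβ0 : 0 ≤ β) (hR : 1 ≤ R) (hv0 : 0 < v)
    (u : ℝ) (hu : |u| ≤ 1) (p : ℤ × ℤ) (m : ℤ) (hm : m ∉ Mps L p) :
    termp f v R β p m u = 0 := by
  unfold termp
  by_cases hg : Int.gcd p.1 p.2 = 1
  · rw [if_pos hg]
    by_cases hRw : R ≤ wp v p u
    · by_cases hfz : f ((Xp p u + (m:ℝ)) * Real.sqrt (wp v p u)) = 0
      · rw [hfz]; ring
      · exfalso
        have hw0 : 0 ≤ wp v p u := vcd_nonneg hv0.le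
        have hs1 : 1 ≤ Real.sqrt (wp v p u) := by
          rw [← Real.sqrt_one]
          exact Real.sqrt_le_sqrt (by linarith)
        have h1 : |(Xp p u + (m:ℝ)) * Real.sqrt (wp v p u)| ≤ L := hL _ hfz
        have h2 : |Xp p u + (m:ℝ)| ≤ L := by
          rw [abs_mul, abs_of_pos (by linarith : (0:ℝ) < Real.sqrt (wp v p u))] at h1
          nlinarith [abs_nonneg (Xp p u + (m:ℝ))]
        have h3 : |(m:ℝ)| ≤ |Xp p u| + |Xp p u + (m:ℝ)| := by
          have he : (m:ℝ) = (Xp p u + (m:ℝ)) - Xp p u := by ring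
          calc |(m:ℝ)| = |(Xp p u + (m:ℝ)) - Xp p u| := by rw [← he]
            _ ≤ |Xp p u + (m:ℝ)| + |Xp p u| := abs_sub _ _
            _ = |Xp p u| + |Xp p u + (m:ℝ)| := by ring
        have h4 : ((|m| : ℤ) : ℝ) ≤ ((|p.1| : ℤ) : ℝ) + ((|p.2| : ℤ) : ℝ) + ((⌈L⌉ : ℤ) : ℝ) + 1 := by
          rw [Int.cast_abs]
          have hX := Xp_bound p u hu
          have hceil := Int.le_ceil L
          linarith
        have h5 : |m| ≤ |p.1| + |p.2| + ⌈L⌉ + 1 := by exact_mod_cast h4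
        apply hm
        rw [Mps, Finset.mem_Icc]
        exact abs_le.mp h5
    · rw [chiR_of_lt (not_le.mp hRw)]; ring
  · rw [if_neg hg]

/-- vanishing of terms outside `Kz`. -/
lemma termp_eq_zero_of_not_mem_K (f : ℝ → ℝ)
    {v R β : ℝ} (hR : 1 ≤ R) (hv0 : 0 < v) (hv1 : v < 1)
    (u : ℝ) (hu : |u| ≤ 1) (p : ℤ × ℤ) (hp : p ∉ Kz R v) (m : ℤ) :
    termp f v R β p m u = 0 := by
  set Cz : ℤ := ⌈Real.sqrt (1/(R*v))⌉ with hCz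
  have hCz0 : (0:ℤ) ≤ Cz := Int.ceil_nonneg (Real.sqrt_nonneg _)
  unfold termp
  by_cases hg : Int.gcd p.1 p.2 = 1
  · rw [if_pos hg]
    have hwlt : wp v p u < R := by
      by_cases hp1 : p.1 ∈ Finset.Icc (-Cz) Cz
      · -- then p.2 is out of range
        have hp2 : p.2 ∉ Finset.Icc (-(Cz+1)) (Cz+1) := by
          intro h; exact hp (Finset.mem_product.mpr ⟨hp1, h⟩)
        have habs2 : Cz + 1 < |p.2| := by
          rcases not_and_or.mp (Finset.mem_Icc.not.mp hp2) with h | h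
          · rw [abs_of_neg (by omega : p.2 < 0)]; omega
          · rw [abs_of_pos (by omega : 0 < p.2)]; omega
        have habs1 : |p.1| ≤ Cz := by
          rw [Finset.mem_Icc] at hp1
          rw [abs_le]; omega
        have key : (1:ℝ) ≤ ((p.1:ℝ) * u + (p.2:ℝ))^2 := by
          have t1 : ((|p.2|:ℤ):ℝ) ≤ |(p.1:ℝ)*u + (p.2:ℝ)| + |(p.1:ℝ)| * |u| := by
            rw [Int.cast_abs]
            have he : (p.2:ℝ) = ((p.1:ℝ)*u + (p.2:ℝ)) - (p.1:ℝ)*u := by ring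
            calc |(p.2:ℝ)| = |((p.1:ℝ)*u + (p.2:ℝ)) - (p.1:ℝ)*u| := by rw [← he]
              _ ≤ |(p.1:ℝ)*u + (p.2:ℝ)| + |(p.1:ℝ)*u| := abs_sub _ _
              _ = |(p.1:ℝ)*u + (p.2:ℝ)| + |(p.1:ℝ)| * |u| := by rw [abs_mul]
          have t2 : |(p.1:ℝ)| * |u| ≤ ((|p.1|:ℤ):ℝ) := by
            rw [Int.cast_abs]
            nlinarith [abs_nonneg (p.1:ℝ), abs_nonneg u]
          have habs2' : Cz + 2 ≤ |p.2| := by omega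
          have t3 : ((Cz:ℝ) + 2) ≤ ((|p.2|:ℤ):ℝ) := by exact_mod_cast habs2'
          have t4 : ((|p.1|:ℤ):ℝ) ≤ (Cz:ℝ) := by exact_mod_cast habs1
          have t5 : (2:ℝ) ≤ |(p.1:ℝ)*u + (p.2:ℝ)| := by linarith
          nlinarith [abs_nonneg ((p.1:ℝ)*u + (p.2:ℝ)), sq_abs ((p.1:ℝ)*u + (p.2:ℝ))]
        calc wp v p u ≤ v := vcd_le_v hv0 key
          _ < R := by linarith
      · -- p.1 out of range
        have habs : Cz < |p.1| := by
          rcases not_and_or.mp (Finset.mem_Icc.not.mp hp1) with h | h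
          · rw [abs_of_neg (by omega : p.1 < 0)]; omega
          · rw [abs_of_pos (by omega : 0 < p.1)]; omega
        have hc0 : p.1 ≠ 0 := by
          intro h0; rw [h0] at habs; simp at habs; omega
        have hc0' : ((p.1:ℝ)) ≠ 0 := by exact_mod_cast hc0
        have hq2 : Real.sqrt (1/(R*v)) ^ 2 = 1/(R*v) := Real.sq_sqrt (by positivity)
        have hqlt : Real.sqrt (1/(R*v)) < ((|p.1|:ℤ):ℝ) := by
          calc Real.sqrt (1/(R*v)) ≤ (Cz:ℝ) := Int.le_ceil _
            _ < ((|p.1|:ℤ):ℝ) := by exact_mod_cast habs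
        have hsq : 1/(R*v) < (p.1:ℝ)^2 := by
          have h1 := sq_abs ((p.1:ℝ))
          rw [← Int.cast_abs] at h1
          nlinarith [Real.sqrt_nonneg (1/(R*v))]
        have h2 : 1 / ((p.1:ℝ)^2 * v) < R := by
          rw [div_lt_iff₀ (by positivity)]
          rw [div_lt_iff₀ (by positivity)] at hsq
          nlinarith
        calc wp v p u ≤ 1 / ((p.1:ℝ)^2 * v) := vcd_le_one_div hv0 hc0'
          _ < R := h2
    rw [chiR_of_lt hwlt]; ring
  · rw [if_neg hg]

/-- the pointwise bound on the finite sum over m. -/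
lemma Tp_bound (f : ℝ → ℝ) (M L : ℝ) (hM : ∀ x, |f x| ≤ M)
    (hL : ∀ x, f x ≠ 0 → |x| ≤ L) (hL0 : 0 ≤ L)
    {v R β : ℝ} (hβ0 : 0 ≤ β) (hR : 1 ≤ R) (hv0 : 0 < v)
    (p : ℤ × ℤ) (u : ℝ) :
    |Tp f v R β L p u| ≤ (M * (2*L+1)) * Gp v R β p u := by
  have hM0 : 0 ≤ M := le_trans (abs_nonneg _) (hM 0)
  have hM'0 : 0 ≤ M * (2*L+1) := mul_nonneg hM0 (by linarith)
  have hw0 : 0 ≤ wp v p u := vcd_nonneg hv0.le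
  have hGnn : 0 ≤ Gp v R β p u :=
    mul_nonneg (Real.rpow_nonneg hw0 _) (chiR_nonneg _ _)
  by_cases hg : Int.gcd p.1 p.2 = 1
  · by_cases hRw : R ≤ wp v p u
    · have hs1 : 1 ≤ Real.sqrt (wp v p u) := by
        rw [← Real.sqrt_one]
        exact Real.sqrt_le_sqrt (by linarith)
      have hsplit : Tp f v R β L p u
          = (∑ m ∈ Mps L p, f ((Xp p u + (m:ℝ)) * Real.sqrt (wp v p u)))
            * ((wp v p u)^β * chiR R (wp v p u)) := by
        unfold Tp
        rw [Finset.sum_mul]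
        apply Finset.sum_congr rfl
        intro m _
        unfold termp
        rw [if_pos hg]
        ring
      have hGval : Gp v R β p u = (wp v p u)^β := by
        unfold Gp
        rw [chiR_of_le hRw, mul_one]
      rw [hsplit, chiR_of_le hRw, mul_one, abs_mul, hGval,
        abs_of_nonneg (Real.rpow_nonneg hw0 β)]
      apply mul_le_mul_of_nonneg_right _ (Real.rpow_nonneg hw0 β)
      calc |∑ m ∈ Mps L p, f ((Xp p u + (m:ℝ)) * Real.sqrt (wp v p u))|
          ≤ ∑ m ∈ Mps L p, |f ((Xp p u + (m:ℝ)) * Real.sqrt (wp v p u))| :=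
            Finset.abs_sum_le_sum_abs _ _
        _ ≤ M * (2*L+1) := sum_abs_f_le f M L hM hL hL0 _ _ hs1 _
    · have hTz : Tp f v R β L p u = 0 := by
        apply Finset.sum_eq_zero
        intro m _
        unfold termp
        rw [if_pos hg, chiR_of_lt (not_le.mp hRw)]
        ring
      rw [hTz, abs_zero]
      exact mul_nonneg hM'0 hGnn
  · have hTz : Tp f v R β L p u = 0 := by
      apply Finset.sum_eq_zero
      intro m _
      unfold termp
      rw [if_neg hg]
    rw [hTz, abs_zero]
    exact mul_nonneg hM'0 hGnn
/-! measurability -/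

lemma chiR_meas (R : ℝ) : Measurable (chiR R) := by
  have h : chiR R = (Set.Ici R).indicator (fun _ => (1:ℝ)) := by
    funext x
    unfold chiR Set.indicator
    simp [Set.mem_Ici]
  rw [h]
  exact measurable_const.indicator measurableSet_Ici

lemma wp_meas (v : ℝ) (p : ℤ × ℤ) : Measurable (wp v p) := vcd_measurable _ _ _

lemma Gp_meas {β : ℝ} (hβ0 : 0 ≤ β) (v R : ℝ) (p : ℤ × ℤ) : Measurable (Gp v R β p) := by
  unfold Gp
  exact ((Real.continuous_rpow_const hβ0).measurable.comp (wp_meas v p)).mul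
    ((chiR_meas R).comp (wp_meas v p))

lemma termp_meas (f : ℝ → ℝ) (hf : Continuous f) {β : ℝ} (hβ0 : 0 ≤ β) (v R : ℝ)
    (p : ℤ × ℤ) (m : ℤ) : Measurable (termp f v R β p m) := by
  by_cases hg : Int.gcd p.1 p.2 = 1
  · have he : termp f v R β p m = fun u =>
        f ((Xp p u + (m:ℝ)) * Real.sqrt (wp v p u)) * (wp v p u) ^ β * chiR R (wp v p u) := by
      funext u; unfold termp; rw [if_pos hg]
    rw [he]
    have hXm : Measurable (fun u => Xp p u + (m:ℝ)) := by
      unfold Xp; fun_prop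
    have hsq : Measurable (fun u => Real.sqrt (wp v p u)) :=
      Real.continuous_sqrt.measurable.comp (wp_meas v p)
    exact ((hf.measurable.comp (hXm.mul hsq)).mul
      ((Real.continuous_rpow_const hβ0).measurable.comp (wp_meas v p))).mul
      ((chiR_meas R).comp (wp_meas v p))
  · have he : termp f v R β p m = fun _ => (0:ℝ) := by
      funext u; unfold termp; rw [if_neg hg]
    rw [he]
    exact measurable_const

lemma Tp_meas (f : ℝ → ℝ) (hf : Continuous f) {β : ℝ} (hβ0 : 0 ≤ β) (v R L : ℝ)
    (p : ℤ × ℤ) : Measurable (Tp f v R β L p) :=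
  Finset.measurable_sum _ (fun m _ => termp_meas f hf hβ0 v R p m)

lemma integrable_of_bdd {g : ℝ → ℝ} (hgm : Measurable g) (C : ℝ) (hgC : ∀ u, |g u| ≤ C) :
    IntegrableOn g (Set.Icc (-1:ℝ) 1) volume := by
  refine ⟨hgm.aestronglyMeasurable, ?_⟩
  apply HasFiniteIntegral.of_bounded (C := C)
  exact ae_of_all _ (fun u => by rw [Real.norm_eq_abs]; exact hgC u)

lemma Gp_le {v R β : ℝ} (hβ0 : 0 ≤ β) (hv0 : 0 < v) (hv1 : v < 1) (p : ℤ × ℤ) (u : ℝ) :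
    Gp v R β p u ≤ (1/v)^β := by
  have hw0 : 0 ≤ wp v p u := vcd_nonneg hv0.le
  calc Gp v R β p u ≤ (wp v p u)^β * 1 :=
        mul_le_mul_of_nonneg_left (chiR_le_one _ _) (Real.rpow_nonneg hw0 _)
    _ = (wp v p u)^β := mul_one _
    _ ≤ (1/v)^β := Real.rpow_le_rpow hw0 (vcd_le_inv p.1 p.2 u hv0 hv1.le) hβ0

/-- Main per-(R,v) integral bound. -/
lemma integral_bound (f : ℝ → ℝ) (hf : Continuous f) (M L : ℝ) (hM : ∀ x, |f x| ≤ M)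
    (hL : ∀ x, f x ≠ 0 → |x| ≤ L) (hL0 : 0 ≤ L)
    {β R v : ℝ} (hβ0 : 0 ≤ β) (hβ1 : β < 1) (hR : 1 ≤ R) (hv0 : 0 < v) (hv1 : v < 1) :
    |∫ u in Set.Icc (-1:ℝ) 1, FRbeta f R β u v|
       ≤ (M * (2*L+1)) * (20 * (2:ℝ)^β * (1 - (2:ℝ)^(β-1))⁻¹ * R^(β-1)) := by
  have hM0 : 0 ≤ M := le_trans (abs_nonneg _) (hM 0)
  have hM'0 : 0 ≤ M * (2*L+1) := mul_nonneg hM0 (by linarith)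
  have hR0 : (0:ℝ) < R := by linarith
  have hGnn : ∀ p u, 0 ≤ Gp v R β p u := fun p u =>
    mul_nonneg (Real.rpow_nonneg (vcd_nonneg hv0.le) _) (chiR_nonneg _ _)
  have hGint : ∀ p, IntegrableOn (Gp v R β p) (Set.Icc (-1:ℝ) 1) volume := by
    intro p
    apply integrable_of_bdd (Gp_meas hβ0 v R p) ((1/v)^β)
    intro u
    rw [abs_of_nonneg (hGnn p u)]
    exact Gp_le hβ0 hv0 hv1 p u
  have hTint : ∀ p, IntegrableOn (Tp f v R β L p) (Set.Icc (-1:ℝ) 1) volume := by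
    intro p
    apply integrable_of_bdd (Tp_meas f hf hβ0 v R L p) ((M * (2*L+1)) * (1/v)^β)
    intro u
    calc |Tp f v R β L p u| ≤ (M * (2*L+1)) * Gp v R β p u :=
          Tp_bound f M L hM hL hL0 hβ0 hR hv0 p u
      _ ≤ (M * (2*L+1)) * (1/v)^β :=
          mul_le_mul_of_nonneg_left (Gp_le hβ0 hv0 hv1 p u) hM'0
  -- rewrite the integrand as a finite sum on Icc
  have hFeq : Set.EqOn (fun u => FRbeta f R β u v)
      (fun u => ∑ p ∈ Kz R v, Tp f v R β L p u) (Set.Icc (-1:ℝ) 1) := by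
    intro u hu
    have hu1 : |u| ≤ 1 := abs_le.mpr ⟨hu.1, hu.2⟩
    show FRbeta f R β u v = ∑ p ∈ Kz R v, Tp f v R β L p u
    rw [FRbeta_eq_tsum]
    have hin : ∀ p : ℤ × ℤ, (∑' m : ℤ, termp f v R β p m u) = Tp f v R β L p u := by
      intro p
      exact tsum_eq_sum (fun m hm => termp_eq_zero_of_not_mem f M L hL hβ0 hR hv0 u hu1 p m hm)
    rw [tsum_congr hin]
    apply tsum_eq_sum
    intro p hp
    unfold Tp
    exact Finset.sum_eq_zero
      (fun m _ => termp_eq_zero_of_not_mem_K f hR hv0 hv1 u hu1 p hp m)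
  have hsplit : ∫ u in Set.Icc (-1:ℝ) 1, FRbeta f R β u v
      = ∑ p ∈ Kz R v, ∫ u in Set.Icc (-1:ℝ) 1, Tp f v R β L p u := by
    rw [setIntegral_congr_fun measurableSet_Icc hFeq]
    exact integral_finset_sum _ (fun p _ => hTint p)
  -- lintegral comparison
  set lint : ℤ × ℤ → ℝ≥0∞ :=
    fun p => ∫⁻ u in Set.Icc (-1:ℝ) 1, ENNReal.ofReal (Gp v R β p u) with hlint
  have htot : ∑' p : ℤ × ℤ, lint p
      ≤ ENNReal.ofReal (20 * (2:ℝ)^β * (1 - (2:ℝ)^(β-1))⁻¹ * R^(β-1)) :=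
    lintegral_tsum_le hv0 hv1 hR hβ0 hβ1
  have hlp : ∀ p, ENNReal.ofReal (∫ u in Set.Icc (-1:ℝ) 1, Gp v R β p u) = lint p := fun p =>
    ofReal_integral_eq_lintegral_ofReal (hGint p) (ae_of_all _ (hGnn p))
  have hnt : ∀ p, lint p ≠ ⊤ := by
    intro p
    exact ne_top_of_le_ne_top ENNReal.ofReal_ne_top (le_trans (ENNReal.le_tsum p) htot)
  have hCnn : 0 ≤ 20 * (2:ℝ)^β * (1 - (2:ℝ)^(β-1))⁻¹ * R^(β-1) := by
    have h1 : (2:ℝ)^(β-1) < 1 := Real.rpow_lt_one_of_one_lt_of_neg one_lt_two (by linarith)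
    have h2 : (0:ℝ) ≤ (1 - (2:ℝ)^(β-1))⁻¹ := inv_nonneg.mpr (by linarith)
    have h3 : (0:ℝ) ≤ (2:ℝ)^β := Real.rpow_nonneg (by norm_num) _
    have h4 : (0:ℝ) ≤ R^(β-1) := Real.rpow_nonneg hR0.le _
    positivity
  have hsumK : ∑ p ∈ Kz R v, ∫ u in Set.Icc (-1:ℝ) 1, Gp v R β p u
      ≤ 20 * (2:ℝ)^β * (1 - (2:ℝ)^(β-1))⁻¹ * R^(β-1) := by
    have h2 : ∑ p ∈ Kz R v, ∫ u in Set.Icc (-1:ℝ) 1, Gp v R β p u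
        = (∑ p ∈ Kz R v, lint p).toReal := by
      rw [ENNReal.toReal_sum (fun p _ => hnt p)]
      apply Finset.sum_congr rfl
      intro p _
      rw [← hlp p, ENNReal.toReal_ofReal (integral_nonneg (hGnn p))]
    rw [h2]
    calc (∑ p ∈ Kz R v, lint p).toReal
        ≤ (ENNReal.ofReal (20 * (2:ℝ)^β * (1 - (2:ℝ)^(β-1))⁻¹ * R^(β-1))).toReal :=
          ENNReal.toReal_mono ENNReal.ofReal_ne_top
            (le_trans (ENNReal.sum_le_tsum (Kz R v)) htot)
      _ = 20 * (2:ℝ)^β * (1 - (2:ℝ)^(β-1))⁻¹ * R^(β-1) := ENNReal.toReal_ofReal hCnn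
  -- assemble
  rw [hsplit]
  calc |∑ p ∈ Kz R v, ∫ u in Set.Icc (-1:ℝ) 1, Tp f v R β L p u|
      ≤ ∑ p ∈ Kz R v, |∫ u in Set.Icc (-1:ℝ) 1, Tp f v R β L p u| :=
        Finset.abs_sum_le_sum_abs _ _
    _ ≤ ∑ p ∈ Kz R v, ∫ u in Set.Icc (-1:ℝ) 1, |Tp f v R β L p u| := by
        apply Finset.sum_le_sum
        intro p _
        exact norm_integral_le_integral_norm (Tp f v R β L p)
    _ ≤ ∑ p ∈ Kz R v, ∫ u in Set.Icc (-1:ℝ) 1, (M * (2*L+1)) * Gp v R β p u := by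
        apply Finset.sum_le_sum
        intro p _
        apply integral_mono (hTint p).abs ((hGint p).const_mul _)
        intro u
        exact Tp_bound f M L hM hL hL0 hβ0 hR hv0 p u
    _ = (M * (2*L+1)) * ∑ p ∈ Kz R v, ∫ u in Set.Icc (-1:ℝ) 1, Gp v R β p u := by
        rw [Finset.mul_sum]
        apply Finset.sum_congr rfl
        intro p _
        exact integral_const_mul _ _
    _ ≤ (M * (2*L+1)) * (20 * (2:ℝ)^β * (1 - (2:ℝ)^(β-1))⁻¹ * R^(β-1)) :=
        mul_le_mul_of_nonneg_left hsumK hM'0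
end NoEscapeAux

open NoEscapeAux in
/-- No escape of mass for `0 ≤ β < 1`:
`lim_{R→∞} limsup_{v→0⁺} |∫_{-1}^1 F_{R,β}(u,v) du| = 0`. -/
theorem no_escape_of_mass_beta_lt_one
    (f : ℝ → ℝ) (hf : Continuous f) (hcs : HasCompactSupport f)
    (β : ℝ) (hβ0 : 0 ≤ β) (hβ1 : β < 1) :
    Tendsto (fun R : ℝ =>
        Filter.limsup (fun v : ℝ => |∫ u in Set.Icc (-1 : ℝ) 1, FRbeta f R β u v|)
          (𝓝[>] (0 : ℝ)))
      atTop (𝓝 0) := by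
  -- bounds on f
  obtain ⟨M, hM⟩ := hcs.exists_bound_of_continuous hf
  have hM' : ∀ x, |f x| ≤ M := fun x => by rw [← Real.norm_eq_abs]; exact hM x
  obtain ⟨r, hr⟩ := hcs.isBounded.subset_closedBall 0
  set L : ℝ := max r 0 with hLdef
  have hL0 : 0 ≤ L := le_max_right _ _
  have hL : ∀ x, f x ≠ 0 → |x| ≤ L := by
    intro x hx
    have hxt : x ∈ tsupport f := subset_tsupport f hx
    have := hr hxt
    rw [Metric.mem_closedBall, Real.dist_eq, sub_zero] at this
    exact le_trans this (le_max_left _ _)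
  -- the constant
  set CC : ℝ := (M * (2*L+1)) * (20 * (2:ℝ)^β * (1 - (2:ℝ)^(β-1))⁻¹) with hCC
  -- eventual bound in v for fixed R ≥ 1
  have hev : ∀ R : ℝ, 1 ≤ R →
      ∀ᶠ v in 𝓝[>] (0:ℝ),
        |∫ u in Set.Icc (-1 : ℝ) 1, FRbeta f R β u v| ≤ CC * R^(β-1) := by
    intro R hR
    have hIoo : Set.Ioo (0:ℝ) 1 ∈ 𝓝[>] (0:ℝ) :=
      Ioo_mem_nhdsGT_of_mem (Set.mem_Ico.mpr ⟨le_refl 0, one_pos⟩)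
    filter_upwards [hIoo] with v hv
    calc |∫ u in Set.Icc (-1 : ℝ) 1, FRbeta f R β u v|
        ≤ (M * (2*L+1)) * (20 * (2:ℝ)^β * (1 - (2:ℝ)^(β-1))⁻¹ * R^(β-1)) :=
          integral_bound f hf M L hM' hL hL0 hβ0 hβ1 hR hv.1 hv.2
      _ = CC * R^(β-1) := by rw [hCC]; ring
  apply squeeze_zero' (g := fun R : ℝ => CC * R^(β-1))
  · filter_upwards [eventually_ge_atTop (1:ℝ)] with R hR
    exact le_limsup_of_frequently_le
      (Eventually.of_forall (fun v => abs_nonneg _)).frequently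
      (isBoundedUnder_of_eventually_le (hev R hR))
  · filter_upwards [eventually_ge_atTop (1:ℝ)] with R hR
    exact limsup_le_of_le
      (isCoboundedUnder_le_of_eventually_le _
        (Eventually.of_forall (fun v => abs_nonneg _)))
      (hev R hR)
  · have h1 : Tendsto (fun R : ℝ => R^(β-1)) atTop (𝓝 0) := by
      rw [show β - 1 = -(1-β) by ring]
      exact tendsto_rpow_neg_atTop (by linarith)
    have h2 := h1.const_mul CC
    simpa using h2
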